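/- arXiv:2505.00728 — 2 statements merged into one kernel-verified Lean document; each statement's English description precedes it below -/
import Mathlib

section
/- Let P = v_1…v_k be a path and let b ∈ [0,B]. If α_b(P) ≥ 0, then α_b(P) = min{B, b + g(v_1…v_{i*})} + g(v_{i*}…v_k) for every index i* maximizing the prefix gain g(v_1…v_i) over 1 ≤ i ≤ k. -/
open Finset

namespace EV

noncomputable section

/-- Charge after traversing `i` arcs of a path with arc gains `g`, battery capacity `B`,
initial charge `b`. -/
def charge (B b : ℝ) (g : ℕ → ℝ) : ℕ → ℝ
  | 0 => b
  | i + 1 => min (charge B b g i + g i) B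

/-- The traversal of the path with `n` arcs is feasible from initial charge `b`. -/
def Feasible (B b : ℝ) (g : ℕ → ℝ) (n : ℕ) : Prop :=
  ∀ i < n, 0 ≤ charge B b g i + g i

open Classical in
/-- Maximum final charge `α_b(P)` for a path `P` with `n` arc gains `g`,
as an extended real (`⊥ = -∞` if the traversal is infeasible). -/
def alpha (B b : ℝ) (g : ℕ → ℝ) (n : ℕ) : EReal :=
  if Feasible B b g n then ((charge B b g n : ℝ) : EReal) else ⊥

/-- Gain of the `i`-th vertex (0-indexed): the sum of the first `i` arc gains. -/
def vGain (g : ℕ → ℝ) (i : ℕ) : ℝ := ∑ t ∈ Finset.range i, g t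

/-- `P` is traversable: `α_B(P) ≥ 0`, i.e. feasible from a full battery. -/
def Traversable (B : ℝ) (g : ℕ → ℝ) (n : ℕ) : Prop := Feasible B B g n

/-- `C` is a charge drop schedule for a path with `n` arcs (vertices `0,…,n`):
no drop at the first vertex, all drops nonnegative. -/
def Schedule (C : ℕ → ℝ) (n : ℕ) : Prop := C 0 = 0 ∧ ∀ i ≤ n, 0 ≤ C i

/-- Gain of vertex `i` with respect to the charge drop schedule `C`. -/
def cGain (g C : ℕ → ℝ) (i : ℕ) : ℝ := vGain g i - ∑ t ∈ Finset.range (i + 1), C t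

/-- `P` (with `n` arcs) is ascending with respect to the schedule `C`. -/
def AscendingC (B : ℝ) (g C : ℕ → ℝ) (n : ℕ) : Prop :=
  Traversable B g n ∧ ∀ i ≤ n, 0 ≤ cGain g C i ∧ cGain g C i ≤ cGain g C n

/-- `P` (with `n` arcs) is descending with respect to the schedule `C`. -/
def DescendingC (B : ℝ) (g C : ℕ → ℝ) (n : ℕ) : Prop :=
  Traversable B g n ∧ ∀ i ≤ n, cGain g C n ≤ cGain g C i ∧ cGain g C i ≤ 0

/-- `P` is monotone with respect to the schedule `C`. -/
def MonotoneC (B : ℝ) (g C : ℕ → ℝ) (n : ℕ) : Prop :=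
  AscendingC B g C n ∨ DescendingC B g C n

/-- Ascending with respect to the zero schedule. -/
def Ascending (B : ℝ) (g : ℕ → ℝ) (n : ℕ) : Prop := AscendingC B g (fun _ => 0) n

/-- Descending with respect to the zero schedule. -/
def Descending (B : ℝ) (g : ℕ → ℝ) (n : ℕ) : Prop := DescendingC B g (fun _ => 0) n

/-- Monotone with respect to the zero schedule. -/
def MonotonePath (B : ℝ) (g : ℕ → ℝ) (n : ℕ) : Prop := Ascending B g n ∨ Descending B g n

/-- The contiguous subpath whose arcs start at arc index `a`. -/
def SubPath (g : ℕ → ℝ) (a : ℕ) : ℕ → ℝ := fun t => g (a + t)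

/-- Restriction of a charge drop schedule to the subpath starting at vertex `a`:
no drop at the subpath's first vertex. -/
def restrict (C : ℕ → ℝ) (a : ℕ) : ℕ → ℝ := fun t => if t = 0 then 0 else C (a + t)

/-- First-arc-bounded with respect to a schedule `C` (no drop at the second vertex,
and all vertex gains lie between the gains of the first two vertices). -/
def FirstArcBoundedC (g C : ℕ → ℝ) (n : ℕ) : Prop :=
  C 1 = 0 ∧
    ((0 ≤ g 0 ∧ ∀ i ≤ n, 0 ≤ cGain g C i ∧ cGain g C i ≤ g 0) ∨
     (g 0 ≤ 0 ∧ ∀ i ≤ n, g 0 ≤ cGain g C i ∧ cGain g C i ≤ 0))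

/-- Last-arc-bounded with respect to a schedule `C` (no drops at the last two vertices,
and all vertex gains lie between the gains of the last two vertices). -/
def LastArcBoundedC (g C : ℕ → ℝ) (n : ℕ) : Prop :=
  C (n - 1) = 0 ∧ C n = 0 ∧
    ((0 ≤ g (n - 1) ∧ ∀ i ≤ n, cGain g C (n - 1) ≤ cGain g C i ∧ cGain g C i ≤ cGain g C n) ∨
     (g (n - 1) < 0 ∧ ∀ i ≤ n, cGain g C n ≤ cGain g C i ∧ cGain g C i ≤ cGain g C (n - 1)))

/-- First-arc-bounded (zero schedule). -/
def FirstArcBounded (g : ℕ → ℝ) (n : ℕ) : Prop := FirstArcBoundedC g (fun _ => 0) n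

/-- Last-arc-bounded (zero schedule). -/
def LastArcBounded (g : ℕ → ℝ) (n : ℕ) : Prop := LastArcBoundedC g (fun _ => 0) n

/-- Arc-bounded: first- or last-arc-bounded. -/
def ArcBounded (g : ℕ → ℝ) (n : ℕ) : Prop := FirstArcBounded g n ∨ LastArcBounded g n

/-- A funnel: arc-bounded and containing no monotone subpath of 2 or 3 consecutive arcs. -/
def Funnel (B : ℝ) (g : ℕ → ℝ) (n : ℕ) : Prop :=
  ArcBounded g n ∧ ∀ a m, (m = 2 ∨ m = 3) → a + m ≤ n → ¬ MonotonePath B (SubPath g a) m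

/-- `j = s̄(i)`: the maximal index `j ≥ i` (among arcs of a path with `n` arcs) such that
the subpath of arcs `i,…,j` is first-arc-bounded. -/
def IsSbar (g : ℕ → ℝ) (n i j : ℕ) : Prop :=
  i ≤ j ∧ j < n ∧ FirstArcBounded (SubPath g i) (j - i + 1) ∧
    ∀ j', i ≤ j' → j' < n → FirstArcBounded (SubPath g i) (j' - i + 1) → j' ≤ j

/-- `j = s̲(i)`: the minimal index `j ≤ i` such that the subpath of arcs `j,…,i`
is last-arc-bounded. -/
def IsSlow (g : ℕ → ℝ) (n i j : ℕ) : Prop :=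
  j ≤ i ∧ i < n ∧ LastArcBounded (SubPath g j) (i - j + 1) ∧
    ∀ j', j' ≤ i → LastArcBounded (SubPath g j') (i - j' + 1) → j ≤ j'

/-- Arc gains of the walk around a cycle with `m` arc gains `g`, starting at vertex `a`. -/
def cyc (g : ℕ → ℝ) (m a : ℕ) : ℕ → ℝ := fun t => g ((a + t) % m)

/-- A walk of length `ℓ` from `x` to `y` in the directed graph with arc relation `A`. -/
def IsWalk {V : Type*} (A : V → V → Prop) (w : ℕ → V) (ℓ : ℕ) (x y : V) : Prop :=
  w 0 = x ∧ w ℓ = y ∧ ∀ t < ℓ, A (w t) (w (t + 1))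

/-- The sequence of arc gains induced by a walk `w` in a graph with gain function `g`. -/
def walkGains {V : Type*} (g : V → V → ℝ) (w : ℕ → V) : ℕ → ℝ :=
  fun t => g (w t) (w (t + 1))

/-! The recursion `c ↦ min (c + g) B` never cuts below zero, so the charge is the gain of the
path plus the smallest of the headrooms `b` and `B - g(v_1…v_t)` over the vertices `t ≥ 1`
reached so far. A maximizer `i` of the prefix gain realizes this minimum, the headroom at
`i` being `B - g(v_1…v_i)` if `i ≥ 1` and `b` if `i = 0`. -/

def headrooms (B b : ℝ) (g : ℕ → ℝ) (j : ℕ) : Set ℝ :=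
  insert b ((fun t => B - vGain g t) '' Set.Icc 1 j)

lemma vGain_succ (g : ℕ → ℝ) (j : ℕ) : vGain g (j + 1) = vGain g j + g j :=
  Finset.sum_range_succ g j

lemma headrooms_succ (B b : ℝ) (g : ℕ → ℝ) (j : ℕ) :
    headrooms B b g (j + 1) = insert (B - vGain g (j + 1)) (headrooms B b g j) := by
  rw [headrooms, headrooms, ← Set.insert_Icc_right_eq_Icc_add_one (by omega : 1 ≤ j + 1),
    Set.image_insert_eq, Set.insert_comm]

theorem isLeast_headrooms_charge_sub_vGain (B b : ℝ) (g : ℕ → ℝ) (j : ℕ) :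
    IsLeast (headrooms B b g j) (charge B b g j - vGain g j) := by
  induction j with
  | zero => simp [headrooms, charge, vGain, isLeast_singleton]
  | succ j ih =>
    have hstep : charge B b g (j + 1) - vGain g (j + 1) =
        min (B - vGain g (j + 1)) (charge B b g j - vGain g j) := by
      rw [charge.eq_2, vGain_succ, ← min_sub_sub_right, min_comm]
      congr 1
      ring
    rw [headrooms_succ, hstep]
    exact ih.insert _

theorem isLeast_headrooms_of_forall_vGain_le {B b : ℝ} {g : ℕ → ℝ} {n i : ℕ} (hbB : b ≤ B)
    (hi : i ≤ n) (hmax : ∀ j ≤ n, vGain g j ≤ vGain g i) :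
    IsLeast (headrooms B b g n) (min (B - vGain g i) b) := by
  constructor
  · rcases i.eq_zero_or_pos with rfl | hi0
    · rw [vGain, Finset.range_zero, Finset.sum_empty, sub_zero, min_eq_right hbB]
      exact Set.mem_insert b _
    · rcases min_choice (B - vGain g i) b with hmin | hmin <;> rw [hmin]
      · exact Set.mem_insert_of_mem b ⟨i, ⟨hi0, hi⟩, rfl⟩
      · exact Set.mem_insert b _
  · rintro x (rfl | ⟨t, ⟨-, ht⟩, rfl⟩)
    · exact min_le_right _ _
    · exact min_le_of_left_le (by linarith [hmax t ht])

theorem alpha_eq_of_nonneg_general (B : ℝ) (b : ℝ) (hbB : b ≤ B)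
    (g : ℕ → ℝ) (n : ℕ) (h : (0 : EReal) ≤ alpha B b g n)
    (i : ℕ) (hi : i ≤ n) (hmax : ∀ j ≤ n, vGain g j ≤ vGain g i) :
    alpha B b g n = ((min B (b + vGain g i) + (vGain g n - vGain g i) : ℝ) : EReal) := by
  have hfeas : Feasible B b g n := by
    by_contra hf
    simp [alpha, hf] at h
  have hcharge : charge B b g n - vGain g n = min (B - vGain g i) b :=
    (isLeast_headrooms_charge_sub_vGain B b g n).unique
      (isLeast_headrooms_of_forall_vGain_le hbB hi hmax)
  have hmin : min B (b + vGain g i) = min (B - vGain g i) b + vGain g i := by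
    rw [← min_add_add_right, sub_add_cancel, add_comm]
  rw [alpha, if_pos hfeas, hmin]
  congr 1
  linarith

/-- If `α_b(P) ≥ 0`, then
`α_b(P) = min{B, b + g(v_1…v_{i*})} + g(v_{i*}…v_k)` for every index `i*` maximizing the
prefix gain. -/
theorem alpha_eq_of_nonneg (B : ℝ) (hB : 0 < B) (b : ℝ) (hb0 : 0 ≤ b) (hbB : b ≤ B)
    (g : ℕ → ℝ) (n : ℕ) (h : (0 : EReal) ≤ alpha B b g n)
    (i : ℕ) (hi : i ≤ n) (hmax : ∀ j ≤ n, vGain g j ≤ vGain g i) :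
    alpha B b g n = ((min B (b + vGain g i) + (vGain g n - vGain g i) : ℝ) : EReal) :=
  alpha_eq_of_nonneg_general B b hbB g n h i hi hmax

end

end EV
end

section
/- Let P = v_1…v_k be a path that is first-arc-bounded with respect to a charge drop schedule C with g_1 ≤ 0, and let b ∈ [0,B]. If g_1 ≥ −b, then α_b(P) ≥ b + g^C(P). -/
open Finset

namespace EV

noncomputable section

/-! As long as the schedule's lower envelope `b + g^C(v_i)` stays below the capacity, the
charge never falls below it: a drop `d_i ≥ 0` only lowers the envelope, and capping at `B`
cannot cut below a value that is itself at most `B`. For a first-arc-bounded path with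
`g_1 ≤ 0` the envelope lies in `[b + g_1, b] ⊆ [0, B]`, so it also witnesses feasibility. -/

theorem cGain_succ (g C : ℕ → ℝ) (i : ℕ) :
    cGain g C (i + 1) = cGain g C i + g i - C (i + 1) := by
  simp only [cGain, vGain, Finset.sum_range_succ]
  ring

section Envelope

variable {B b : ℝ} {g C : ℕ → ℝ} {n : ℕ}

theorem add_cGain_le_charge (hC : ∀ i ≤ n, 0 ≤ C i) (hcap : ∀ i ≤ n, b + cGain g C i ≤ B) :
    ∀ i ≤ n, b + cGain g C i ≤ charge B b g i := by
  intro i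
  induction i with
  | zero =>
    intro h0
    have hC0 := hC 0 h0
    simp only [cGain, vGain, Finset.range_zero, Finset.sum_empty, zero_add,
      Finset.sum_range_one, charge]
    linarith
  | succ i ih =>
    intro hi
    have hstep : b + cGain g C (i + 1) ≤ charge B b g i + g i := by
      rw [cGain_succ]
      linarith [ih (by omega), hC (i + 1) hi]
    exact le_min hstep (hcap (i + 1) hi)

theorem feasible_of_add_cGain_nonneg (hC : ∀ i ≤ n, 0 ≤ C i)
    (hcap : ∀ i ≤ n, b + cGain g C i ≤ B) (hnonneg : ∀ i ≤ n, 0 ≤ b + cGain g C i) :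
    Feasible B b g n := by
  intro i hi
  have hcharge := add_cGain_le_charge hC hcap i hi.le
  have hnext := hnonneg (i + 1) hi
  rw [cGain_succ] at hnext
  linarith [hC (i + 1) hi]

theorem add_cGain_le_alpha (hC : ∀ i ≤ n, 0 ≤ C i)
    (hcap : ∀ i ≤ n, b + cGain g C i ≤ B) (hnonneg : ∀ i ≤ n, 0 ≤ b + cGain g C i) :
    ((b + cGain g C n : ℝ) : EReal) ≤ alpha B b g n := by
  rw [alpha, if_pos (feasible_of_add_cGain_nonneg hC hcap hnonneg)]
  exact_mod_cast add_cGain_le_charge hC hcap n le_rfl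

end Envelope

theorem FirstArcBoundedC.cGain_mem_Icc_of_nonpos {g C : ℕ → ℝ} {n : ℕ}
    (h : FirstArcBoundedC g C n) (hneg : g 0 ≤ 0) :
    ∀ i ≤ n, g 0 ≤ cGain g C i ∧ cGain g C i ≤ 0 := by
  rcases h.2 with ⟨-, hbd⟩ | ⟨-, hbd⟩
  · exact fun i hi => ⟨hneg.trans (hbd i hi).1, (hbd i hi).2.trans hneg⟩
  · exact hbd

theorem alpha_of_firstArcBounded_general (B : ℝ) (g C : ℕ → ℝ) (n : ℕ)
    (hC : Schedule C n) (hFAB : FirstArcBoundedC g C n) (hneg : g 0 ≤ 0)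
    (b : ℝ) (hbB : b ≤ B) (hg : -b ≤ g 0) :
    ((b + cGain g C n : ℝ) : EReal) ≤ alpha B b g n := by
  have hbd := hFAB.cGain_mem_Icc_of_nonpos hneg
  refine add_cGain_le_alpha hC.2 (fun i hi => ?_) (fun i hi => ?_)
  · linarith [(hbd i hi).2]
  · linarith [(hbd i hi).1]

/-- If `P` is first-arc-bounded with respect to a schedule `C` with
`g_1 ≤ 0`, `b ∈ [0,B]` and `g_1 ≥ -b`, then `α_b(P) ≥ b + g^C(P)`. -/
theorem alpha_of_firstArcBounded (B : ℝ) (hB : 0 < B) (g C : ℕ → ℝ) (n : ℕ) (hn : 1 ≤ n)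
    (hC : Schedule C n) (hFAB : FirstArcBoundedC g C n) (hneg : g 0 ≤ 0)
    (b : ℝ) (hb0 : 0 ≤ b) (hbB : b ≤ B) (hg : -b ≤ g 0) :
    ((b + cGain g C n : ℝ) : EReal) ≤ alpha B b g n :=
  alpha_of_firstArcBounded_general B g C n hC hFAB hneg b hbB hg

end

end EV
end
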